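/- Discrete global energy conservation for EC(λ) with periodic boundary conditions: fix Δx > 0, Δt > 0, λ ∈ ℝ and a natural number N ≥ 1. Let u : ℤ × ℤ → ℝ be N-periodic in the first index (u(i+N,j) = u(i,j) for all i,j) and satisfy Ã(i,j) = 0 for all (i,j), where Ã(i,j) = (φ(i+1,j) − φ(i−1,j))/(2Δx) + (u(i,j+1) − u(i,j))/Δt and φ(i,j) = (1/3)·[(u(i,j)² + u(i,j+1)²)/2]·[(u(i,j) + u(i,j+1))/2] + (1/2)·Σ_{j'∈{j,j+1}} (u(i+1,j') − 2u(i,j') + u(i−1,j'))/Δx² + λ·Δx²·[ (u(i+1,j+1) − u(i−1,j+1)) − (u(i+1,j) − u(i−1,j)) ]/(2·Δx·Δt). Define the discrete energy density G̃₃(i,j) = u(i,j)⁴/12 + (1/2)·u(i,j)·(u(i+1,j) − 2u(i,j) + u(i−1,j))/Δx². Then the discrete global energy Σ_{i=0}^{N−1} G̃₃(i,j) is independent of j: for every j ∈ ℤ, Σ_{i=0}^{N−1} G̃₃(i,j+1) = Σ_{i=0}^{N−1} G̃₃(i,j). -/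
import Mathlib


noncomputable section

/-- Forward difference in the first (space) index. -/
def Dm (dx : ℝ) (v : ℤ × ℤ → ℝ) : ℤ × ℤ → ℝ := fun p => (v (p.1 + 1, p.2) - v p) / dx

/-- Forward difference in the second (time) index. -/
def Dn (dt : ℝ) (v : ℤ × ℤ → ℝ) : ℤ × ℤ → ℝ := fun p => (v (p.1, p.2 + 1) - v p) / dt

/-- Forward average in the first (space) index. -/
def mum (v : ℤ × ℤ → ℝ) : ℤ × ℤ → ℝ := fun p => (v (p.1 + 1, p.2) + v p) / 2

/-- Forward average in the second (time) index. -/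
def mun (v : ℤ × ℤ → ℝ) : ℤ × ℤ → ℝ := fun p => (v (p.1, p.2 + 1) + v p) / 2

/-- The discrete characteristic `φ = Q̃₃` of the EC(λ) schemes. -/
def phiD (dx dt lam : ℝ) (u : ℤ × ℤ → ℝ) (i j : ℤ) : ℝ :=
  (1 / 3) * ((u (i, j) ^ 2 + u (i, j + 1) ^ 2) / 2) * ((u (i, j) + u (i, j + 1)) / 2)
  + (1 / 2) * ((u (i + 1, j) - 2 * u (i, j) + u (i - 1, j)) / dx ^ 2
             + (u (i + 1, j + 1) - 2 * u (i, j + 1) + u (i - 1, j + 1)) / dx ^ 2)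
  + lam * dx ^ 2 * ((u (i + 1, j + 1) - u (i - 1, j + 1)) - (u (i + 1, j) - u (i - 1, j)))
      / (2 * dx * dt)

/-- The EC(λ) finite difference scheme `Ã` for the mKdV equation. -/
def schemeA (dx dt lam : ℝ) (u : ℤ × ℤ → ℝ) (i j : ℤ) : ℝ :=
  (phiD dx dt lam u (i + 1) j - phiD dx dt lam u (i - 1) j) / (2 * dx)
  + (u (i, j + 1) - u (i, j)) / dt

/-- The discrete energy density `G̃₃`. -/
def G3D (dx : ℝ) (u : ℤ × ℤ → ℝ) (i j : ℤ) : ℝ :=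
  u (i, j) ^ 4 / 12
  + (1 / 2) * u (i, j) * ((u (i + 1, j) - 2 * u (i, j) + u (i - 1, j)) / dx ^ 2)

/-- The discrete energy flux `F̃₃`. -/
def F3D (dx dt lam : ℝ) (u : ℤ × ℤ → ℝ) (i j : ℤ) : ℝ :=
  (1 / 2) * (phiD dx dt lam u (i - 1) j * phiD dx dt lam u i j
    + Dm dx (mun u) (i - 1, j) * Dn dt (mum u) (i - 1, j)
    - mum (mun u) (i - 1, j) * Dm dx (Dn dt u) (i - 1, j)
    + lam * dx ^ 2 * Dn dt u (i, j) * Dn dt u (i - 1, j))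

set_option maxHeartbeats 2000000 in
private theorem key_local (dx dt lam : ℝ) (hdx : dx ≠ 0) (hdt : dt ≠ 0)
    (u : ℤ × ℤ → ℝ) (i j : ℤ) :
    (F3D dx dt lam u (i + 1) j - F3D dx dt lam u i j) / dx
    + (G3D dx u i (j + 1) - G3D dx u i j) / dt
    = phiD dx dt lam u i j * schemeA dx dt lam u i j := by
  simp only [F3D, G3D, phiD, schemeA, Dm, Dn, mum, mun,
    show i + 1 - 1 = i from by ring, show i - 1 + 1 = i from by ring]
  field_simp
  ring

/-- Discrete global energy conservation for EC(λ) with periodic boundary conditions: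
if `u` is `N`-periodic in the first index and satisfies the EC(λ) scheme, then the
discrete global energy `Σ_{i=0}^{N−1} G̃₃(i,j)` is independent of `j`. -/
theorem EC_discrete_global_energy_conserved
    (dx dt lam : ℝ) (hdx : 0 < dx) (hdt : 0 < dt)
    (N : ℕ) (hN : 1 ≤ N)
    (u : ℤ × ℤ → ℝ)
    (hper : ∀ i j : ℤ, u (i + (N : ℤ), j) = u (i, j))
    (hsol : ∀ i j : ℤ, schemeA dx dt lam u i j = 0) :
    ∀ j : ℤ,
      (∑ i ∈ Finset.range N, G3D dx u (i : ℤ) (j + 1))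
        = ∑ i ∈ Finset.range N, G3D dx u (i : ℤ) j := by
  have hdx' : dx ≠ 0 := ne_of_gt hdx
  have hdt' : dt ≠ 0 := ne_of_gt hdt
  have hF : ∀ i j : ℤ, F3D dx dt lam u (i + (N : ℤ)) j = F3D dx dt lam u i j := by
    intro i j
    simp only [F3D, phiD, Dm, Dn, mum, mun]
    simp only [show ∀ k : ℤ, k + (N : ℤ) - 1 = (k - 1) + (N : ℤ) from fun k => by ring,
      show ∀ k : ℤ, k + (N : ℤ) + 1 = (k + 1) + (N : ℤ) from fun k => by ring]
    simp only [hper]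
  intro j
  have hloc : ∀ i : ℤ,
      G3D dx u i (j + 1) - G3D dx u i j
        = -(dt / dx) * (F3D dx dt lam u (i + 1) j - F3D dx dt lam u i j) := by
    intro i
    have h := key_local dx dt lam hdx' hdt' u i j
    rw [hsol i j, mul_zero] at h
    field_simp at h ⊢
    linarith
  have tele : ∑ i ∈ Finset.range N,
      (F3D dx dt lam u ((i : ℤ) + 1) j - F3D dx dt lam u (i : ℤ) j)
      = F3D dx dt lam u (N : ℤ) j - F3D dx dt lam u 0 j := by
    have h := Finset.sum_range_sub (f := fun n : ℕ => F3D dx dt lam u (n : ℤ) j) N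
    simpa using h
  have hFN : F3D dx dt lam u (N : ℤ) j = F3D dx dt lam u 0 j := by
    have := hF 0 j; simpa using this
  have hzero : ∑ i ∈ Finset.range N, (G3D dx u (i : ℤ) (j + 1) - G3D dx u (i : ℤ) j) = 0 := by
    calc ∑ i ∈ Finset.range N, (G3D dx u (i : ℤ) (j + 1) - G3D dx u (i : ℤ) j)
        = ∑ i ∈ Finset.range N,
            (-(dt / dx) * (F3D dx dt lam u ((i : ℤ) + 1) j - F3D dx dt lam u (i : ℤ) j)) := by
          exact Finset.sum_congr rfl fun i _ => hloc i
      _ = -(dt / dx) * ∑ i ∈ Finset.range N,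
            (F3D dx dt lam u ((i : ℤ) + 1) j - F3D dx dt lam u (i : ℤ) j) := by
          rw [Finset.mul_sum]
      _ = 0 := by rw [tele, hFN]; ring
  have := Finset.sum_sub_distrib (f := fun i : ℕ => G3D dx u (i : ℤ) (j + 1))
    (g := fun i : ℕ => G3D dx u (i : ℤ) j) (s := Finset.range N)
  rw [this] at hzero
  linarith
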